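/- Let k be a field and f, g : C → D homomorphisms of (non-counital) k-coalgebras with C conilpotent. Let E = ⋂_{p,q≥0} Ker((1^⊗p ⊗ (f−g) ⊗ 1^⊗q) ∘ Δ^(p+1+q)) ⊆ C, which is a subcoalgebra. Then E with the inclusion e : E → C is an equalizer of f and g in the category of conilpotent k-coalgebras: whenever h : B → C is a coalgebra homomorphism from a coalgebra B with f ∘ h = g ∘ h, then h factors uniquely through e. -/

import Mathlib

/-!
Write `K p q = (1^{⊗p} ⊗ (f - g) ⊗ 1^{⊗q}) ∘ Δ^{(p+1+q)}`, so that `E = ⋂ ker K p q`. Directly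
`K (p+1) q = (1 ⊗ K p q) ∘ Δ`, and by coassociativity `K p (q+1) = (K p q ⊗ 1) ∘ Δ` up to
re-bracketing. Hence for `x ∈ E` every contraction of `Δ x` against a functional, in either
tensor slot, lies in `E` again; over a field this forces `Δ x ∈ E ⊗ E`, so `E` is a
subcoalgebra, conilpotent because `C` is. The same two recursions show that the image of a
coalgebra map `h` with `(f - g) ∘ h = 0` is killed by every `K p q`, i.e. lies in `E`.
-/

open TensorProduct LinearMap

structure ModB (k : Type) [CommRing k] where
  carrier : Type
  [ag : AddCommGroup carrier]
  [mo : Module k carrier]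

attribute [instance] ModB.ag ModB.mo

variable (k : Type) [CommRing k]

/-- Iterated tensor power: `TP k C n` has `n+1` factors of `C`. -/
noncomputable def TP (C : Type) [AddCommGroup C] [Module k C] : ℕ → ModB k
  | 0 => ⟨C⟩
  | n + 1 => ⟨C ⊗[k] (TP C n).carrier⟩

variable {k}
variable {C D : Type} [AddCommGroup C] [Module k C] [AddCommGroup D] [Module k D]

/-- `iterΔ Δ n` is the `n`-fold iterate `Δ^(n+1) : C → C^{⊗(n+1)}`. -/
noncomputable def iterΔ (Δ : C →ₗ[k] C ⊗[k] C) : ∀ n, C →ₗ[k] (TP k C n).carrier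
  | 0 => LinearMap.id
  | n + 1 => (TensorProduct.map LinearMap.id (iterΔ Δ n)).comp Δ

/-- `n+1`-fold tensor power of a linear map. -/
noncomputable def powMap (f : C →ₗ[k] D) : ∀ n, (TP k C n).carrier →ₗ[k] (TP k D n).carrier
  | 0 => f
  | n + 1 => TensorProduct.map f (powMap f n)

/-- Coassociativity. -/
def Coassoc (Δ : C →ₗ[k] C ⊗[k] C) : Prop :=
  (TensorProduct.assoc k C C C).toLinearMap ∘ₗ (TensorProduct.map Δ LinearMap.id) ∘ₗ Δ
    = (TensorProduct.map LinearMap.id Δ) ∘ₗ Δ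

/-- A (non-counital) coalgebra, bundled. -/
structure NCCoalg (k : Type) [CommRing k] where
  carrier : Type
  [ag : AddCommGroup carrier]
  [mo : Module k carrier]
  Δ : carrier →ₗ[k] carrier ⊗[k] carrier
  coassoc : Coassoc Δ

attribute [instance] NCCoalg.ag NCCoalg.mo

def IsCoalgHom (A B : NCCoalg k) (f : A.carrier →ₗ[k] B.carrier) : Prop :=
  B.Δ ∘ₗ f = (TensorProduct.map f f) ∘ₗ A.Δ

def Conilpotent (A : NCCoalg k) : Prop :=
  ∀ t : A.carrier, ∃ n, iterΔ A.Δ n t = 0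

/-- Cast between tensor powers of equal length. -/
noncomputable def TPcast {m n : ℕ} (h : m = n) :
    (TP k C m).carrier ≃ₗ[k] (TP k C n).carrier := by
  subst h; exact LinearEquiv.refl k _

variable (k C) in
/-- `Tail M q` is `M ⊗ C^{⊗q}` (right-nested). -/
noncomputable def Tail (M : Type) [AddCommGroup M] [Module k M] : ℕ → ModB k
  | 0 => ⟨M⟩
  | q + 1 => ⟨M ⊗[k] (TP k C q).carrier⟩

/-- `φ ⊗ 1^{⊗q} : C^{⊗(q+1)} → M ⊗ C^{⊗q}`, applying `φ` to the first factor. -/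
noncomputable def tailMap {M : Type} [AddCommGroup M] [Module k M] (φ : C →ₗ[k] M) :
    ∀ q, (TP k C q).carrier →ₗ[k] (Tail k C M q).carrier
  | 0 => φ
  | q + 1 =>
    (TensorProduct.map φ LinearMap.id
      : (C ⊗[k] (TP k C q).carrier) →ₗ[k] (M ⊗[k] (TP k C q).carrier))

variable (k C) in
/-- `Mix M p q` is `C^{⊗p} ⊗ M ⊗ C^{⊗q}` (right-nested). -/
noncomputable def Mix (M : Type) [AddCommGroup M] [Module k M] : ℕ → ℕ → ModB k
  | 0, q => Tail k C M q
  | p + 1, q => ⟨C ⊗[k] (Mix M p q).carrier⟩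

/-- `1^{⊗p} ⊗ φ ⊗ 1^{⊗q} : C^{⊗(p+1+q)} → C^{⊗p} ⊗ M ⊗ C^{⊗q}`
(the domain has `p+q+1` factors, i.e. is `TP k C (p+q)`). -/
noncomputable def sandwich {M : Type} [AddCommGroup M] [Module k M] (φ : C →ₗ[k] M) :
    ∀ p q, (TP k C (p + q)).carrier →ₗ[k] (Mix k C M p q).carrier
  | 0, q => (tailMap φ q) ∘ₗ (TPcast (by omega : 0 + q = q)).toLinearMap
  | p + 1, q =>
    (TensorProduct.map LinearMap.id (sandwich φ p q)
        : (C ⊗[k] (TP k C (p + q)).carrier) →ₗ[k] (C ⊗[k] (Mix k C M p q).carrier)) ∘ₗ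
      (TPcast (by omega : (p + 1) + q = (p + q) + 1)).toLinearMap

section CommRing

variable {M X Y : Type} [AddCommGroup M] [Module k M] [AddCommGroup X] [Module k X]
  [AddCommGroup Y] [Module k Y]

lemma TPcast_comp_iterΔ (Δ : C →ₗ[k] C ⊗[k] C) {m n : ℕ} (h : m = n) :
    (TPcast h).toLinearMap ∘ₗ iterΔ Δ m = iterΔ Δ n := by
  subst h; rfl

lemma Coassoc.map_id_comp_comul {Δ : C →ₗ[k] C ⊗[k] C} (hc : Coassoc Δ) (F : C →ₗ[k] X)
    (e : X ⊗[k] C →ₗ[k] Y) :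
    map LinearMap.id (e ∘ₗ map F LinearMap.id ∘ₗ Δ) ∘ₗ Δ =
      (map LinearMap.id e ∘ₗ (TensorProduct.assoc k C X C).toLinearMap) ∘ₗ
        map (map LinearMap.id F ∘ₗ Δ) LinearMap.id ∘ₗ Δ := by
  calc _ = map LinearMap.id e ∘ₗ map LinearMap.id (map F LinearMap.id) ∘ₗ
            (map LinearMap.id Δ ∘ₗ Δ) := by
        simp only [← comp_assoc, ← map_comp, comp_id]
    _ = map LinearMap.id e ∘ₗ (map LinearMap.id (map F LinearMap.id) ∘ₗ
            (TensorProduct.assoc k C C C).toLinearMap) ∘ₗ map Δ LinearMap.id ∘ₗ Δ := by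
        rw [← hc]; rfl
    _ = _ := by
        rw [map_map_comp_assoc_eq, ← map_comp_rTensor]
        rfl

noncomputable def appendTP : ∀ n : ℕ, (TP k C n).carrier ⊗[k] C ≃ₗ[k] (TP k C (n + 1)).carrier
  | 0 => LinearEquiv.refl k _
  | n + 1 => TensorProduct.assoc k C (TP k C n).carrier C ≪≫ₗ (appendTP n).lTensor C

variable (k C) in
noncomputable def appendTail (M : Type) [AddCommGroup M] [Module k M] :
    ∀ q : ℕ, (Tail k C M q).carrier ⊗[k] C ≃ₗ[k] (Tail k C M (q + 1)).carrier
  | 0 => LinearEquiv.refl k _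
  | q + 1 => TensorProduct.assoc k M (TP k C q).carrier C ≪≫ₗ (appendTP q).lTensor M

variable (k C) in
noncomputable def appendMix (M : Type) [AddCommGroup M] [Module k M] :
    ∀ p q : ℕ, (Mix k C M p q).carrier ⊗[k] C ≃ₗ[k] (Mix k C M p (q + 1)).carrier
  | 0, q => appendTail k C M q
  | p + 1, q => TensorProduct.assoc k C (Mix k C M p q).carrier C ≪≫ₗ (appendMix M p q).lTensor C

lemma iterΔ_succ_right {Δ : C →ₗ[k] C ⊗[k] C} (hc : Coassoc Δ) :
    ∀ n, iterΔ Δ (n + 1) = (appendTP n).toLinearMap ∘ₗ map (iterΔ Δ n) LinearMap.id ∘ₗ Δ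
  | 0 => rfl
  | n + 1 => by
    change map LinearMap.id (iterΔ Δ (n + 1)) ∘ₗ Δ = _
    conv_lhs => rw [iterΔ_succ_right hc n, hc.map_id_comp_comul]
    rfl

lemma tailMap_succ_comp_appendTP (φ : C →ₗ[k] M) :
    ∀ q, tailMap φ (q + 1) ∘ₗ (appendTP q).toLinearMap =
      (appendTail k C M q).toLinearMap ∘ₗ map (tailMap φ q) LinearMap.id
  | 0 => rfl
  | _ + 1 => TensorProduct.ext_threefold fun _ _ _ => rfl

noncomputable def sandwichComul (Δ : C →ₗ[k] C ⊗[k] C) (φ : C →ₗ[k] M) (p q : ℕ) :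
    C →ₗ[k] (Mix k C M p q).carrier :=
  sandwich φ p q ∘ₗ iterΔ Δ (p + q)

lemma sandwichComul_zero_left (Δ : C →ₗ[k] C ⊗[k] C) (φ : C →ₗ[k] M) (q : ℕ) :
    sandwichComul Δ φ 0 q = tailMap φ q ∘ₗ iterΔ Δ q := by
  change (tailMap φ q ∘ₗ (TPcast (zero_add q)).toLinearMap) ∘ₗ iterΔ Δ (0 + q) = _
  rw [comp_assoc, TPcast_comp_iterΔ]

lemma sandwichComul_zero_zero (Δ : C →ₗ[k] C ⊗[k] C) (φ : C →ₗ[k] M) :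
    sandwichComul Δ φ 0 0 = φ :=
  sandwichComul_zero_left Δ φ 0

lemma sandwichComul_succ_left (Δ : C →ₗ[k] C ⊗[k] C) (φ : C →ₗ[k] M) (p q : ℕ) :
    sandwichComul Δ φ (p + 1) q = map LinearMap.id (sandwichComul Δ φ p q) ∘ₗ Δ := by
  change (map LinearMap.id (sandwich φ p q) ∘ₗ (TPcast (Nat.succ_add p q)).toLinearMap) ∘ₗ
    iterΔ Δ (p + 1 + q) = _
  erw [comp_assoc, TPcast_comp_iterΔ]
  change map LinearMap.id (sandwich φ p q) ∘ₗ map LinearMap.id (iterΔ Δ (p + q)) ∘ₗ Δ = _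
  rw [← comp_assoc, ← map_comp, id_comp]
  rfl

lemma sandwichComul_succ_right {Δ : C →ₗ[k] C ⊗[k] C} (hc : Coassoc Δ) (φ : C →ₗ[k] M) :
    ∀ p q, sandwichComul Δ φ p (q + 1) =
      (appendMix k C M p q).toLinearMap ∘ₗ map (sandwichComul Δ φ p q) LinearMap.id ∘ₗ Δ
  | 0, q => by
    rw [sandwichComul_zero_left, iterΔ_succ_right hc, ← comp_assoc, ← comp_assoc,
      tailMap_succ_comp_appendTP, comp_assoc, comp_assoc, ← comp_assoc Δ, ← map_comp, id_comp,
      sandwichComul_zero_left]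
    rfl
  | p + 1, q => by
    rw [sandwichComul_succ_left, sandwichComul_succ_right hc φ p q, hc.map_id_comp_comul,
      ← sandwichComul_succ_left]
    rfl

noncomputable def sandwichKer (Δ : C →ₗ[k] C ⊗[k] C) (φ : C →ₗ[k] M) : Submodule k C :=
  ⨅ (p : ℕ) (q : ℕ), ker (sandwichComul Δ φ p q)

lemma mem_sandwichKer {Δ : C →ₗ[k] C ⊗[k] C} {φ : C →ₗ[k] M} {x : C} :
    x ∈ sandwichKer Δ φ ↔ ∀ p q, sandwichComul Δ φ p q x = 0 := by
  simp only [sandwichKer, Submodule.mem_iInf, mem_ker]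

lemma sandwichKer_le_ker (Δ : C →ₗ[k] C ⊗[k] C) (φ : C →ₗ[k] M) : sandwichKer Δ φ ≤ ker φ :=
  fun x hx => by
    have hx00 := mem_sandwichKer.mp hx 0 0
    rw [sandwichComul_zero_zero] at hx00
    exact hx00

lemma lTensor_sandwichComul_comul_eq_zero {Δ : C →ₗ[k] C ⊗[k] C} {φ : C →ₗ[k] M} {x : C}
    (hx : x ∈ sandwichKer Δ φ) (p q : ℕ) : (sandwichComul Δ φ p q).lTensor C (Δ x) = 0 := by
  have h := mem_sandwichKer.mp hx (p + 1) q
  rw [sandwichComul_succ_left] at h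
  exact h

lemma rTensor_sandwichComul_comul_eq_zero {Δ : C →ₗ[k] C ⊗[k] C} (hc : Coassoc Δ)
    {φ : C →ₗ[k] M} {x : C} (hx : x ∈ sandwichKer Δ φ) (p q : ℕ) :
    (sandwichComul Δ φ p q).rTensor C (Δ x) = 0 := by
  rw [← (appendMix k C M p q).map_eq_zero_iff]
  change ((appendMix k C M p q).toLinearMap ∘ₗ map (sandwichComul Δ φ p q) LinearMap.id ∘ₗ Δ) x = 0
  rw [← sandwichComul_succ_right hc]
  exact mem_sandwichKer.mp hx p (q + 1)

variable {B : Type} [AddCommGroup B] [Module k B]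

lemma sandwichComul_comp_eq_zero {Δ : C →ₗ[k] C ⊗[k] C} (hc : Coassoc Δ)
    {ΔB : B →ₗ[k] B ⊗[k] B} {h : B →ₗ[k] C} (hh : Δ ∘ₗ h = map h h ∘ₗ ΔB) {φ : C →ₗ[k] M}
    (h0 : φ ∘ₗ h = 0) : ∀ p q, sandwichComul Δ φ p q ∘ₗ h = 0
  | 0, 0 => by
    rw [sandwichComul_zero_zero]
    exact h0
  | p + 1, 0 => by
    rw [sandwichComul_succ_left]
    erw [comp_assoc, hh, ← comp_assoc, ← map_comp,
      sandwichComul_comp_eq_zero hc hh h0 p 0, map_zero_right, zero_comp]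
  | p, q + 1 => by
    rw [sandwichComul_succ_right hc]
    erw [comp_assoc, comp_assoc, hh, ← comp_assoc ΔB, ← map_comp,
      sandwichComul_comp_eq_zero hc hh h0 p q, map_zero_left, zero_comp, comp_zero]

lemma mem_sandwichKer_of_comp_eq_zero {Δ : C →ₗ[k] C ⊗[k] C} (hc : Coassoc Δ)
    {ΔB : B →ₗ[k] B ⊗[k] B} {h : B →ₗ[k] C} (hh : Δ ∘ₗ h = map h h ∘ₗ ΔB) {φ : C →ₗ[k] M}
    (h0 : φ ∘ₗ h = 0) (b : B) : h b ∈ sandwichKer Δ φ :=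
  mem_sandwichKer.mpr fun p q => by
    rw [← comp_apply, sandwichComul_comp_eq_zero hc hh h0 p q, LinearMap.zero_apply]

lemma iterΔ_comp_eq_powMap_comp {Δ : C →ₗ[k] C ⊗[k] C} {ΔB : B →ₗ[k] B ⊗[k] B}
    {h : B →ₗ[k] C} (hh : Δ ∘ₗ h = map h h ∘ₗ ΔB) :
    ∀ n, iterΔ Δ n ∘ₗ h = powMap h n ∘ₗ iterΔ ΔB n
  | 0 => rfl
  | n + 1 => by
    change (map LinearMap.id (iterΔ Δ n) ∘ₗ Δ) ∘ₗ h =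
      map h (powMap h n) ∘ₗ map LinearMap.id (iterΔ ΔB n) ∘ₗ ΔB
    rw [comp_assoc, hh, ← comp_assoc, ← comp_assoc, ← map_comp, ← map_comp, id_comp, comp_id,
      iterΔ_comp_eq_powMap_comp hh n]

lemma Coassoc.of_injective {Δ : C →ₗ[k] C ⊗[k] C} (hc : Coassoc Δ) {ΔB : B →ₗ[k] B ⊗[k] B}
    {ι : B →ₗ[k] C} (hι : Function.Injective (map ι (map ι ι)))
    (hΔB : map ι ι ∘ₗ ΔB = Δ ∘ₗ ι) : Coassoc ΔB := by
  refine (cancel_left hι).mp ?_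
  calc map ι (map ι ι) ∘ₗ (TensorProduct.assoc k B B B).toLinearMap ∘ₗ map ΔB LinearMap.id ∘ₗ ΔB
      = (TensorProduct.assoc k C C C).toLinearMap ∘ₗ map Δ LinearMap.id ∘ₗ Δ ∘ₗ ι := by
        rw [← comp_assoc, map_map_comp_assoc_eq, comp_assoc, ← comp_assoc ΔB, ← map_comp, hΔB,
          comp_id, ← rTensor_comp_map, comp_assoc, hΔB]
        rfl
    _ = map LinearMap.id Δ ∘ₗ Δ ∘ₗ ι := by rw [← comp_assoc ι, ← comp_assoc ι, hc, comp_assoc]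
    _ = map ι (map ι ι) ∘ₗ map LinearMap.id ΔB ∘ₗ ΔB := by
        rw [← comp_assoc ΔB, ← map_comp, hΔB, comp_id, ← lTensor_comp_map, comp_assoc, hΔB]
        rfl

end CommRing

section Contraction

variable {R M N P : Type} [CommRing R] [AddCommGroup M] [Module R M] [AddCommGroup N]
  [Module R N] [AddCommGroup P] [Module R P]

lemma lid_rTensor_lTensor (l : Module.Dual R M) (φ : N →ₗ[R] P) (z : M ⊗[R] N) :
    TensorProduct.lid R P (l.rTensor P (φ.lTensor M z)) =
      φ (TensorProduct.lid R N (l.rTensor N z)) := by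
  induction z using TensorProduct.induction_on <;> simp_all

lemma rid_lTensor_rTensor (l : Module.Dual R N) (φ : M →ₗ[R] P) (z : M ⊗[R] N) :
    TensorProduct.rid R P (l.lTensor P (φ.rTensor N z)) =
      φ (TensorProduct.rid R M (l.lTensor M z)) := by
  induction z using TensorProduct.induction_on <;> simp_all

lemma lTensor_apply_eq_zero_of_forall_dual [Module.Free R M] {φ : N →ₗ[R] P} {z : M ⊗[R] N}
    (h : ∀ l : Module.Dual R M, φ (TensorProduct.lid R N (l.rTensor N z)) = 0) :
    φ.lTensor M z = 0 := by
  classical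
  let b := Module.Free.chooseBasis R M
  apply (equivFinsuppOfBasisLeft b).injective
  ext i
  rw [equivFinsuppOfBasisLeft_apply, lid_rTensor_lTensor, h, map_zero, Finsupp.zero_apply]

lemma rTensor_apply_eq_zero_of_forall_dual [Module.Free R N] {φ : M →ₗ[R] P} {z : M ⊗[R] N}
    (h : ∀ l : Module.Dual R N, φ (TensorProduct.rid R M (l.lTensor M z)) = 0) :
    φ.rTensor N z = 0 := by
  classical
  let b := Module.Free.chooseBasis R N
  apply (equivFinsuppOfBasisRight b).injective
  ext i
  rw [equivFinsuppOfBasisRight_apply, rid_lTensor_rTensor, h, map_zero, Finsupp.zero_apply]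

end Contraction

section Field

variable {K V W U : Type} [Field K] [AddCommGroup V] [Module K V] [AddCommGroup W] [Module K W]
  [AddCommGroup U] [Module K U]

lemma powMap_injective {f : V →ₗ[K] W} (hf : Function.Injective f) :
    ∀ n, Function.Injective (powMap f n)
  | 0 => hf
  | n + 1 => map_injective_of_flat_flat _ _ hf (powMap_injective hf n)

lemma exists_comp_eq_of_range_le {f : V →ₗ[K] W} {g : U →ₗ[K] W} (hg : Function.Injective g)
    (h : range f ≤ range g) : ∃ j : V →ₗ[K] U, g ∘ₗ j = f := by
  obtain ⟨r, hr⟩ := g.exists_leftInverse_of_injective (ker_eq_bot.mpr hg)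
  refine ⟨r ∘ₗ f, LinearMap.ext fun x => ?_⟩
  obtain ⟨y, hy⟩ := h ⟨x, rfl⟩
  rw [comp_apply, comp_apply, ← hy, ← comp_apply r g, hr, id_apply]

lemma mem_range_map_subtype_of_forall_dual {E : Submodule K V} {F : Submodule K W}
    {z : V ⊗[K] W} (hl : ∀ l : Module.Dual K V, TensorProduct.lid K W (l.rTensor W z) ∈ F)
    (hr : ∀ l : Module.Dual K W, TensorProduct.rid K V (l.lTensor V z) ∈ E) :
    z ∈ range (map E.subtype F.subtype) := by
  obtain ⟨r, hrE⟩ := E.subtype.exists_leftInverse_of_injective E.ker_subtype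
  obtain ⟨s, hsF⟩ := F.subtype.exists_leftInverse_of_injective F.ker_subtype
  have hfixE : ∀ x ∈ E, (r x : V) = x := fun x hx => by
    simpa using congr(E.subtype ($hrE ⟨x, hx⟩))
  have hfixF : ∀ y ∈ F, (s y : W) = y := fun y hy => by
    simpa using congr(F.subtype ($hsF ⟨y, hy⟩))
  have hzF : (F.subtype ∘ₗ s).lTensor V z = z := by
    have h0 := lTensor_apply_eq_zero_of_forall_dual (φ := F.subtype ∘ₗ s - LinearMap.id) (z := z)
      fun l => by simp [hfixF _ (hl l)]
    rwa [lTensor_sub, LinearMap.sub_apply, lTensor_id, id_apply, sub_eq_zero] at h0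
  have hzE : (E.subtype ∘ₗ r).rTensor W z = z := by
    have h0 := rTensor_apply_eq_zero_of_forall_dual (φ := E.subtype ∘ₗ r - LinearMap.id) (z := z)
      fun l => by simp [hfixE _ (hr l)]
    rwa [rTensor_sub, LinearMap.sub_apply, rTensor_id, id_apply, sub_eq_zero] at h0
  refine ⟨map r s z, ?_⟩
  rw [← comp_apply, ← map_comp, ← rTensor_comp_lTensor, comp_apply, hzF, hzE]

lemma iterΔ_eq_zero_of_injective {Δ : V →ₗ[K] V ⊗[K] V} {ΔU : U →ₗ[K] U ⊗[K] U}
    {ι : U →ₗ[K] V} (hι : Function.Injective ι) (hΔU : map ι ι ∘ₗ ΔU = Δ ∘ₗ ι) {n : ℕ} {t : U}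
    (ht : iterΔ Δ n (ι t) = 0) : iterΔ ΔU n t = 0 := by
  refine powMap_injective hι n ?_
  rw [map_zero, ← comp_apply, ← iterΔ_comp_eq_powMap_comp hΔU.symm, comp_apply, ht]

lemma comul_mem_range_map_subtype {Δ : V →ₗ[K] V ⊗[K] V} (hc : Coassoc Δ) {φ : V →ₗ[K] W}
    {x : V} (hx : x ∈ sandwichKer Δ φ) :
    Δ x ∈ range (map (sandwichKer Δ φ).subtype (sandwichKer Δ φ).subtype) := by
  refine mem_range_map_subtype_of_forall_dual (fun l => ?_) (fun l => ?_) <;>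
    refine mem_sandwichKer.mpr fun p q => ?_
  · rw [← lid_rTensor_lTensor, lTensor_sandwichComul_comul_eq_zero hx, map_zero, map_zero]
  · rw [← rid_lTensor_rTensor, rTensor_sandwichComul_comul_eq_zero hc hx, map_zero, map_zero]

lemma existsUnique_comulHom_lift {E : Submodule K V} {Δ : V →ₗ[K] V ⊗[K] V}
    {ΔE : E →ₗ[K] E ⊗[K] E} (hΔE : map E.subtype E.subtype ∘ₗ ΔE = Δ ∘ₗ E.subtype)
    {ΔU : U →ₗ[K] U ⊗[K] U} {h : U →ₗ[K] V} (hh : Δ ∘ₗ h = map h h ∘ₗ ΔU) (hE : ∀ u, h u ∈ E) :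
    ∃! j : U →ₗ[K] E, ΔE ∘ₗ j = map j j ∘ₗ ΔU ∧ E.subtype ∘ₗ j = h := by
  have hj : E.subtype ∘ₗ h.codRestrict E hE = h := LinearMap.subtype_comp_codRestrict h E hE
  refine ⟨h.codRestrict E hE, ⟨?_, hj⟩, fun j' hj' => (cancel_left E.injective_subtype).mp ?_⟩
  · refine (cancel_left (Module.Flat.tensorProduct_mapIncl_injective_of_right E E)).mp ?_
    rw [← comp_assoc, hΔE, comp_assoc, hj, hh, ← comp_assoc, ← map_comp, hj]
  · rw [hj'.2, hj]

end Field

theorem equalizer_universal_property_general (k : Type) [Field k]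
    (C D : Type) [AddCommGroup C] [Module k C] [AddCommGroup D] [Module k D]
    (ΔC : C →ₗ[k] C ⊗[k] C)
    (hC : Coassoc ΔC)
    (hconil : ∀ t : C, ∃ n, iterΔ ΔC n t = 0)
    (f g : C →ₗ[k] D)
    (E : Submodule k C)
    (hE : E = ⨅ (p : ℕ) (q : ℕ),
      LinearMap.ker ((sandwich (f - g) p q) ∘ₗ iterΔ ΔC (p + q))) :
    ∃ ΔE : E →ₗ[k] E ⊗[k] E,
      Coassoc ΔE ∧
      (TensorProduct.map E.subtype E.subtype) ∘ₗ ΔE = ΔC ∘ₗ E.subtype ∧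
      (∀ t : E, ∃ n, iterΔ ΔE n t = 0) ∧
      f ∘ₗ E.subtype = g ∘ₗ E.subtype ∧
      ∀ (B : NCCoalg k), Conilpotent B →
        ∀ h : B.carrier →ₗ[k] C, ΔC ∘ₗ h = (TensorProduct.map h h) ∘ₗ B.Δ →
          f ∘ₗ h = g ∘ₗ h →
            ∃! j : B.carrier →ₗ[k] E,
              ΔE ∘ₗ j = (TensorProduct.map j j) ∘ₗ B.Δ ∧ E.subtype ∘ₗ j = h := by
  replace hE : E = sandwichKer ΔC (f - g) := hE
  subst hE
  set E := sandwichKer ΔC (f - g)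
  have hinj : Function.Injective (map E.subtype E.subtype) :=
    Module.Flat.tensorProduct_mapIncl_injective_of_right _ _
  obtain ⟨ΔE, hΔE⟩ := exists_comp_eq_of_range_le (f := ΔC ∘ₗ E.subtype) hinj <| by
    rintro _ ⟨x, rfl⟩
    exact comul_mem_range_map_subtype hC x.2
  refine ⟨ΔE, hC.of_injective (map_injective_of_flat_flat _ _ E.injective_subtype hinj) hΔE, hΔE,
    fun t => ?_, ?_, fun B _ h hh hfg => existsUnique_comulHom_lift hΔE hh ?_⟩
  · obtain ⟨n, hn⟩ := hconil t
    exact ⟨n, iterΔ_eq_zero_of_injective E.injective_subtype hΔE hn⟩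
  · ext x
    exact sub_eq_zero.mp (sandwichKer_le_ker ΔC (f - g) x.2)
  · exact mem_sandwichKer_of_comp_eq_zero hC hh (by rw [sub_comp, hfg, sub_self])

/-- for homomorphisms `f, g : C → D` of non-counital coalgebras with `C`
conilpotent, the subcoalgebra
`E = ⋂_{p,q≥0} Ker((1^{⊗p} ⊗ (f−g) ⊗ 1^{⊗q}) ∘ Δ^{(p+1+q)})`
together with the inclusion `e = E.subtype` is an equalizer of `f` and `g` in the
category of conilpotent coalgebras: `E` carries a (unique) coassociative, conilpotent
comultiplication `ΔE` making `e` a coalgebra homomorphism, `f ∘ e = g ∘ e`, and every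
coalgebra homomorphism `h : B → C` from a conilpotent coalgebra `B` with
`f ∘ h = g ∘ h` factors uniquely through `e` by a coalgebra homomorphism. -/
theorem equalizer_universal_property (k : Type) [Field k]
    (C D : Type) [AddCommGroup C] [Module k C] [AddCommGroup D] [Module k D]
    (ΔC : C →ₗ[k] C ⊗[k] C) (ΔD : D →ₗ[k] D ⊗[k] D)
    (hC : Coassoc ΔC) (hD : Coassoc ΔD)
    (hconil : ∀ t : C, ∃ n, iterΔ ΔC n t = 0)
    (f g : C →ₗ[k] D)
    (hf : ΔD ∘ₗ f = (TensorProduct.map f f) ∘ₗ ΔC)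
    (hg : ΔD ∘ₗ g = (TensorProduct.map g g) ∘ₗ ΔC)
    (E : Submodule k C)
    (hE : E = ⨅ (p : ℕ) (q : ℕ),
      LinearMap.ker ((sandwich (f - g) p q) ∘ₗ iterΔ ΔC (p + q))) :
    ∃ ΔE : E →ₗ[k] E ⊗[k] E,
      Coassoc ΔE ∧
      (TensorProduct.map E.subtype E.subtype) ∘ₗ ΔE = ΔC ∘ₗ E.subtype ∧
      (∀ t : E, ∃ n, iterΔ ΔE n t = 0) ∧
      f ∘ₗ E.subtype = g ∘ₗ E.subtype ∧
      ∀ (B : NCCoalg k), Conilpotent B →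
        ∀ h : B.carrier →ₗ[k] C, ΔC ∘ₗ h = (TensorProduct.map h h) ∘ₗ B.Δ →
          f ∘ₗ h = g ∘ₗ h →
            ∃! j : B.carrier →ₗ[k] E,
              ΔE ∘ₗ j = (TensorProduct.map j j) ∘ₗ B.Δ ∧ E.subtype ∘ₗ j = h :=
  equalizer_universal_property_general k C D ΔC hC hconil f g E hE
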